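/- (Corollary 3.3) For every finite simple graph G with vertex set V and edge set E, every positive integer q, and all real J and β with v := exp(βJ) − 1 ≠ 0, the Potts model partition function with Hamiltonian h₂ satisfies P₂(G;q,β) = q^{k(G)} · (v+1)^{−|E|} · v^{|V| − k(G)} · t(G; (q+v)/v, v+1), where t is the Tutte polynomial given by its spanning-subgraph expansion t(G;x,y) = ∑_{A ⊆ E} (x−1)^{k(A) − k(G)} (y−1)^{|A| − |V| + k(A)}. -/

import Mathlib

open Finset

/-- Number of connected components of the spanning subgraph `(V, A)`. -/
noncomputable def numComp {V : Type*} [Fintype V] (A : Finset (Sym2 V)) : ℕ :=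
  Nat.card (SimpleGraph.fromEdgeSet (A : Set (Sym2 V))).ConnectedComponent

/-- Hamiltonian `h₂(σ) = J·|{e = {i,j} ∈ E : σ i ≠ σ j}|`. -/
noncomputable def hamTwo {V : Type*} [Fintype V] [DecidableEq V]
    (G : SimpleGraph V) [DecidableRel G.Adj] (J : ℝ) {q : ℕ} (σ : V → Fin q) : ℝ :=
  J * ((G.edgeFinset.filter fun e => ¬ (e.map σ).IsDiag).card : ℝ)

/-- The Tutte polynomial via its spanning-subgraph expansion:
`t(G;x,y) = ∑_{A ⊆ E} (x−1)^{k(A) − k(G)} (y−1)^{|A| − |V| + k(A)}`. -/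
noncomputable def tutte {V : Type*} [Fintype V] [DecidableEq V]
    (G : SimpleGraph V) [DecidableRel G.Adj] (x y : ℝ) : ℝ :=
  ∑ A ∈ G.edgeFinset.powerset,
    (x - 1) ^ ((numComp A : ℤ) - (numComp G.edgeFinset : ℤ)) *
      (y - 1) ^ ((A.card : ℤ) - (Fintype.card V : ℤ) + (numComp A : ℤ))

/-!
Writing `w = exp(βJ) = v + 1`, an edge `{i, j}` contributes `w⁻¹ (1 + v [σ i = σ j])` to the
Boltzmann weight. Expanding the product over the edges gives a sum over spanning subgraphs `A`,
and the spin assignments constant along every edge of `A` are the `q ^ k(A)` colourings of the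
components of `A`. This is the Fortuin–Kasteleyn representation
`P₂ = w^{-|E|} ∑_{A ⊆ E} q^{k(A)} v^{|A|}`. With `x - 1 = q / v` and `y - 1 = v`, each term of the
spanning-subgraph expansion of `t` becomes `q^{k(A)} v^{|A|}` up to the common factor
`q^{k(G)} v^{|V| - k(G)}`; the exponent `k(A) - k(G)` is nonnegative because adding edges only
merges components.
-/

namespace SimpleGraph

variable {V β : Type*}

theorem Reachable.eq_of_forall_adj {G : SimpleGraph V} {f : V → β}
    (hf : ∀ u v, G.Adj u v → f u = f v) {u v : V} (h : G.Reachable u v) : f u = f v := by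
  obtain ⟨p⟩ := h
  induction p with
  | nil => rfl
  | cons hadj _ ih => exact (hf _ _ hadj).trans ih

def constOnAdjEquiv (G : SimpleGraph V) :
    {f : V → β // ∀ u v, G.Adj u v → f u = f v} ≃ (G.ConnectedComponent → β) where
  toFun f := Quot.lift f.1 fun _ _ => Reachable.eq_of_forall_adj f.2
  invFun g := ⟨g ∘ G.connectedComponentMk, fun _ _ h =>
    congrArg g (ConnectedComponent.connectedComponentMk_eq_of_adj h)⟩
  left_inv _ := rfl
  right_inv _ := funext (ConnectedComponent.ind fun _ => rfl)

end SimpleGraph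

section

variable {V : Type*}

theorem forall_isDiag_map_iff_fromEdgeSet_adj {β : Type*} (A : Finset (Sym2 V)) (f : V → β) :
    (∀ e ∈ A, (e.map f).IsDiag) ↔
      ∀ u v, (SimpleGraph.fromEdgeSet (A : Set (Sym2 V))).Adj u v → f u = f v := by
  simp only [SimpleGraph.fromEdgeSet_adj, Finset.mem_coe]
  constructor
  · exact fun h u v huv => by simpa using h _ huv.1
  · intro h e he
    induction e with
    | _ u v =>
      by_cases huv : u = v
      · simp [huv]
      · simpa using h u v ⟨he, huv⟩

variable [Fintype V]

theorem card_filter_forall_isDiag_map [DecidableEq V] (A : Finset (Sym2 V)) (q : ℕ) :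
    #{σ : V → Fin q | ∀ e ∈ A, (e.map σ).IsDiag} = q ^ numComp A := by
  classical
  simp_rw [forall_isDiag_map_iff_fromEdgeSet_adj]
  rw [← Fintype.card_subtype, ← Nat.card_eq_fintype_card,
    Nat.card_congr (SimpleGraph.constOnAdjEquiv _), Nat.card_fun, Nat.card_eq_fintype_card,
    Fintype.card_fin, numComp]

theorem numComp_le_of_subset {A B : Finset (Sym2 V)} (h : A ⊆ B) : numComp B ≤ numComp A :=
  Nat.card_le_card_of_surjective _
    (SimpleGraph.ConnectedComponent.surjective_map_ofLE (SimpleGraph.fromEdgeSet_mono (by simpa)))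

theorem prod_ite_one_inv_eq_sum_powerset {ι K : Type*} [Field K] (s : Finset ι) (P : ι → Prop)
    [DecidablePred P] {w : K} (hw : w ≠ 0) :
    ∏ i ∈ s, (if P i then 1 else w⁻¹) =
      w⁻¹ ^ #s * ∑ t ∈ s.powerset, (w - 1) ^ #t * if ∀ i ∈ t, P i then 1 else 0 := by
  have hfactor : ∀ i, (if P i then 1 else w⁻¹) = w⁻¹ * (1 + (w - 1) * if P i then 1 else 0) := by
    intro i
    split_ifs <;> field_simp <;> ring
  simp only [hfactor, Finset.prod_mul_distrib, Finset.prod_const, Finset.prod_one_add,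
    Finset.prod_boole]

variable [DecidableEq V]

/-- The Fortuin–Kasteleyn random-cluster partition function `Z(G; q, v)`. -/
noncomputable def randomCluster (G : SimpleGraph V) [DecidableRel G.Adj] (q v : ℝ) : ℝ :=
  ∑ A ∈ G.edgeFinset.powerset, v ^ #A * q ^ numComp A

theorem exp_neg_mul_hamTwo (G : SimpleGraph V) [DecidableRel G.Adj] (J β : ℝ) {q : ℕ}
    (σ : V → Fin q) :
    Real.exp (-β * hamTwo G J σ) =
      ∏ e ∈ G.edgeFinset, if (e.map σ).IsDiag then 1 else (Real.exp (β * J))⁻¹ := by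
  rw [Finset.prod_ite, Finset.prod_const_one, one_mul, Finset.prod_const, hamTwo,
    ← Real.exp_neg, ← Real.exp_nat_mul]
  ring_nf

theorem sum_exp_neg_mul_hamTwo_eq_randomCluster (G : SimpleGraph V) [DecidableRel G.Adj] (q : ℕ)
    (J β : ℝ) :
    ∑ σ : V → Fin q, Real.exp (-β * hamTwo G J σ) =
      (Real.exp (β * J))⁻¹ ^ #G.edgeFinset * randomCluster G q (Real.exp (β * J) - 1) := by
  simp only [exp_neg_mul_hamTwo, prod_ite_one_inv_eq_sum_powerset _ _ (Real.exp_pos _).ne',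
    ← Finset.mul_sum, randomCluster]
  rw [Finset.sum_comm]
  congr! 2 with A
  rw [← Finset.mul_sum, ← Nat.cast_pow, ← card_filter_forall_isDiag_map A q,
    Finset.natCast_card_filter]
  congr!

theorem randomCluster_eq_tutte (G : SimpleGraph V) [DecidableRel G.Adj] (q : ℝ) {v : ℝ}
    (hv : v ≠ 0) :
    randomCluster G q v = q ^ numComp G.edgeFinset *
      v ^ ((Fintype.card V : ℤ) - numComp G.edgeFinset) * tutte G ((q + v) / v) (v + 1) := by
  have hx : (q + v) / v - 1 = q / v := by field_simp; ring
  rw [tutte, randomCluster, hx, add_sub_cancel_right, Finset.mul_sum]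
  refine Finset.sum_congr rfl fun A hA => ?_
  obtain ⟨d, hd⟩ := Nat.exists_eq_add_of_le (numComp_le_of_subset (Finset.mem_powerset.mp hA))
  set k := numComp G.edgeFinset
  set n : ℤ := (Fintype.card V : ℤ)
  rw [hd, Nat.cast_add, add_sub_cancel_left, zpow_natCast, div_pow, pow_add]
  have hv_exp : v ^ (n - k) * v ^ ((#A : ℤ) - n + (k + d)) = v ^ #A * v ^ d := by
    rw [← zpow_add₀ hv, ← pow_add, ← zpow_natCast]
    congr 1
    push_cast
    ring
  calc v ^ #A * (q ^ k * q ^ d)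
      = q ^ k * q ^ d * (v ^ (n - k) * v ^ ((#A : ℤ) - n + (k + d))) / v ^ d := by
        rw [hv_exp]; field_simp
    _ = _ := by ring

end

theorem pottsTwo_eq_tutte_general {V : Type*} [Fintype V] [DecidableEq V]
    (G : SimpleGraph V) [DecidableRel G.Adj] (q : ℕ) (J β : ℝ)
    (v : ℝ) (hv : v = Real.exp (β * J) - 1) (hv0 : v ≠ 0) :
    (∑ σ : V → Fin q, Real.exp (-β * hamTwo G J σ)) =
      (q : ℝ) ^ (numComp G.edgeFinset) *
        (v + 1) ^ (-(G.edgeFinset.card : ℤ)) *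
        v ^ ((Fintype.card V : ℤ) - (numComp G.edgeFinset : ℤ)) *
        tutte G (((q : ℝ) + v) / v) (v + 1) := by
  have hw : Real.exp (β * J) = v + 1 := by rw [hv, sub_add_cancel]
  rw [sum_exp_neg_mul_hamTwo_eq_randomCluster, hw, add_sub_cancel_right,
    randomCluster_eq_tutte G q hv0, zpow_neg, zpow_natCast, inv_pow]
  ring

/-- **Corollary 3.3.** With `v = exp(βJ) − 1 ≠ 0`,
`P₂(G;q,β) = q^{k(G)} · (v+1)^{−|E|} · v^{|V| − k(G)} · t(G; (q+v)/v, v+1)`. -/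
theorem pottsTwo_eq_tutte {V : Type*} [Fintype V] [DecidableEq V]
    (G : SimpleGraph V) [DecidableRel G.Adj] (q : ℕ) (hq : 0 < q) (J β : ℝ)
    (v : ℝ) (hv : v = Real.exp (β * J) - 1) (hv0 : v ≠ 0) :
    (∑ σ : V → Fin q, Real.exp (-β * hamTwo G J σ)) =
      (q : ℝ) ^ (numComp G.edgeFinset) *
        (v + 1) ^ (-(G.edgeFinset.card : ℤ)) *
        v ^ ((Fintype.card V : ℤ) - (numComp G.edgeFinset : ℤ)) *
        tutte G (((q : ℝ) + v) / v) (v + 1) :=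
  pottsTwo_eq_tutte_general G q J β v hv hv0
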